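/- Let G be a WGA with {q_I} ∈ Obs and let lmax ≥ 1. If Eve wins the safety objective in the perfect-information game G' (never visiting 𝒰), then she also wins the DirFix(0,lmax) objective in G. Explicitly: if λ' is a winning strategy for Eve in G', then the strategy λ defined on play prefixes ρ of G by λ(ρ) = λ'(supp⁻¹(ρ, f_I)) is winning for Eve for DirFix(0,lmax) in G. -/

import Mathlib

open scoped Classical

/-- A weighted game arena with partial observation. -/
structure WGA where
  Q : Type
  fintypeQ : Fintype Q
  qI : Q
  A : Type
  fintypeA : Fintype A
  nonemptyA : Nonempty A
  Δ : Q → A → Q → Prop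
  total : ∀ q a, ∃ q', Δ q a q'
  w : Q → A → Q → ℤ
  Obs : Set (Set Q)
  obs_empty : ∅ ∉ Obs
  obs_partition : ∀ q : Q, ∃! o, o ∈ Obs ∧ q ∈ o

attribute [instance] WGA.fintypeQ WGA.fintypeA WGA.nonemptyA

namespace WGA

variable (G : WGA)

/-- A concrete path compatible with the given sequences of observations and actions. -/
def Concretizes (obs : ℕ → Set G.Q) (act : ℕ → G.A) (π : ℕ → G.Q) : Prop :=
  (∀ i, π i ∈ obs i) ∧ ∀ i, G.Δ (π i) (act i) (π (i + 1))

/-- Plays: infinite abstract paths starting at the initial observation. -/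
def IsPlay (obs : ℕ → Set G.Q) (act : ℕ → G.A) : Prop :=
  (∀ i, obs i ∈ G.Obs) ∧ G.qI ∈ obs 0 ∧ ∃ π, G.Concretizes obs act π

/-- Sum of the `j` transition weights starting at position `i`. -/
def winSum (π : ℕ → G.Q) (act : ℕ → G.A) (i j : ℕ) : ℤ :=
  ∑ k ∈ Finset.range j, G.w (π (i + k)) (act (i + k)) (π (i + k + 1))

/-- Good window at position `i` with window size bound `lmax`. -/
def GW (ν : ℚ) (i lmax : ℕ) (π : ℕ → G.Q) (act : ℕ → G.A) : Prop :=
  ∃ j, 1 ≤ j ∧ j ≤ lmax ∧ ν ≤ (G.winSum π act i j : ℚ) / (j : ℚ)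

def DirFix (ν : ℚ) (lmax : ℕ) (obs : ℕ → Set G.Q) (act : ℕ → G.A) : Prop :=
  ∀ π, G.Concretizes obs act π → ∀ i, G.GW ν i lmax π act

def UFix (ν : ℚ) (lmax : ℕ) (obs : ℕ → Set G.Q) (act : ℕ → G.A) : Prop :=
  ∃ i, ∀ π, G.Concretizes obs act π → ∀ j, i ≤ j → G.GW ν j lmax π act

def Fix (ν : ℚ) (lmax : ℕ) (obs : ℕ → Set G.Q) (act : ℕ → G.A) : Prop :=
  ∀ π, G.Concretizes obs act π → ∃ i, ∀ j, i ≤ j → G.GW ν j lmax π act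

def UDirBnd (ν : ℚ) (obs : ℕ → Set G.Q) (act : ℕ → G.A) : Prop :=
  ∃ lmax, 1 ≤ lmax ∧ ∀ π, G.Concretizes obs act π → ∀ i, G.GW ν i lmax π act

def DirBnd (ν : ℚ) (obs : ℕ → Set G.Q) (act : ℕ → G.A) : Prop :=
  ∀ π, G.Concretizes obs act π → ∃ lmax, 1 ≤ lmax ∧ ∀ i, G.GW ν i lmax π act

def UBnd (ν : ℚ) (obs : ℕ → Set G.Q) (act : ℕ → G.A) : Prop :=
  ∃ lmax, 1 ≤ lmax ∧ ∃ i, ∀ π, G.Concretizes obs act π → ∀ j, i ≤ j → G.GW ν j lmax π act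

def Bnd (ν : ℚ) (obs : ℕ → Set G.Q) (act : ℕ → G.A) : Prop :=
  ∀ π, G.Concretizes obs act π → ∃ lmax, 1 ≤ lmax ∧ ∃ i, ∀ j, i ≤ j → G.GW ν j lmax π act

noncomputable def MPinf (π : ℕ → G.Q) (act : ℕ → G.A) : ℝ :=
  Filter.liminf (fun n : ℕ => (G.winSum π act 0 n : ℝ) / (n : ℝ)) Filter.atTop

noncomputable def MPsup (π : ℕ → G.Q) (act : ℕ → G.A) : ℝ :=
  Filter.limsup (fun n : ℕ => (G.winSum π act 0 n : ℝ) / (n : ℝ)) Filter.atTop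

def MPInfObj (ν : ℚ) (obs : ℕ → Set G.Q) (act : ℕ → G.A) : Prop :=
  ∀ π, G.Concretizes obs act π → (ν : ℝ) ≤ G.MPinf π act

def MPSupObj (ν : ℚ) (obs : ℕ → Set G.Q) (act : ℕ → G.A) : Prop :=
  ∀ π, G.Concretizes obs act π → (ν : ℝ) ≤ G.MPsup π act

/-- The finite history (prefix) of a play after `n` steps, ending with `obs n`. -/
def hist (obs : ℕ → Set G.Q) (act : ℕ → G.A) (n : ℕ) : List (Set G.Q × G.A) :=
  (List.range n).map fun i => (obs i, act i)

/-- A play is consistent with an observation-based strategy of Eve. -/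
def Consistent (str : List (Set G.Q × G.A) → Set G.Q → G.A)
    (obs : ℕ → Set G.Q) (act : ℕ → G.A) : Prop :=
  ∀ n, act n = str (G.hist obs act n) (obs n)

/-- Eve wins an objective if some observation-based strategy forces it on all plays. -/
def Wins (V : (ℕ → Set G.Q) → (ℕ → G.A) → Prop) : Prop :=
  ∃ str : List (Set G.Q × G.A) → Set G.Q → G.A,
    ∀ obs act, G.IsPlay obs act → G.Consistent str obs act → V obs act

/-- σ-successors of a set of states. -/
def postSet (σ : G.A) (s : Set G.Q) : Set G.Q := {q' | ∃ q ∈ s, G.Δ q σ q'}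

end WGA

namespace WGA

variable (G : WGA)

/-- Elements of the function space 𝓕 (validity constraints are given by `ValidF`). -/
def FMap := G.Q → Option (ℕ → ℤ)

/-- The support of an element of 𝓕. -/
def fsupp (f : FMap G) : Set G.Q := {q | f q ≠ none}

/-- `f(q)_i`, the value of `f` at state `q` and window index `i`. -/
def fval (f : FMap G) (q : G.Q) (i : ℕ) : ℤ := ((f q).getD fun _ => 0) i

/-- Membership in 𝓕: values at indices `1,…,lmax` lie in `{−W·lmax,…,0}`
(values at other indices are normalized to `0`). -/
def ValidF (lmax W : ℕ) (f : FMap G) : Prop :=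
  ∀ q g, f q = some g →
    (∀ i, 1 ≤ i → i ≤ lmax → -((W : ℤ) * (lmax : ℤ)) ≤ g i ∧ g i ≤ 0) ∧
    (∀ i, i = 0 ∨ lmax < i → g i = 0)

def Fset (lmax W : ℕ) : Set (FMap G) := {f | G.ValidF lmax W f}

/-- The set whose minimum is `ζ(q)` in the definition of σ-successor. -/
def zetaSet (f1 : FMap G) (σ : G.A) (q : G.Q) (j : ℕ) : Set ℤ :=
  if j = 1 then {x | ∃ p ∈ G.fsupp f1, G.Δ p σ q ∧ x = G.w p σ q}
  else {x | ∃ p ∈ G.fsupp f1, G.Δ p σ q ∧ G.fval f1 p (j - 1) < 0 ∧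
        x = G.fval f1 p (j - 1) + G.w p σ q}

/-- `v = max(−W·lmax, min(0, min Z))`, where the minimum of the empty set is `+∞`. -/
def succVal (lmax W : ℕ) (Z : Set ℤ) (v : ℤ) : Prop :=
  (Z = ∅ ∧ v = max (-((W : ℤ) * (lmax : ℤ))) 0) ∨
  ∃ z, IsLeast Z z ∧ v = max (-((W : ℤ) * (lmax : ℤ))) (min 0 z)

/-- `f2` is a σ-successor of `f1`. -/
def IsSucc (lmax W : ℕ) (f1 : FMap G) (σ : G.A) (f2 : FMap G) : Prop :=
  G.ValidF lmax W f2 ∧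
  (∃ o ∈ G.Obs, G.fsupp f2 = G.postSet σ (G.fsupp f1) ∩ o) ∧
  ∀ q ∈ G.fsupp f2, ∀ j, 1 ≤ j → j ≤ lmax →
    succVal lmax W (G.zetaSet f1 σ q j) (G.fval f2 q j)

/-- The initial function `f_I`. -/
noncomputable def fI : FMap G := fun q => if q = G.qI then some (fun _ => 0) else none

/-- The unsafe set 𝒰 ⊆ 𝓕. -/
def FU (lmax W : ℕ) : Set (FMap G) :=
  {f | G.ValidF lmax W f ∧ ∃ q ∈ G.fsupp f, G.fval f q lmax < 0}

/-- The partial order ⪯ on 𝓕. -/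
def Preceq (lmax : ℕ) (f g : FMap G) : Prop :=
  G.fsupp f ⊆ G.fsupp g ∧
  ∀ q ∈ G.fsupp f, ∀ i, 1 ≤ i → i ≤ lmax →
    ∃ j, i ≤ j ∧ j ≤ lmax ∧ G.fval g q j ≤ G.fval f q i

/-- Upward-closedness (within 𝓕) with respect to ⪯. -/
def UpClosed (lmax W : ℕ) (S : Set (FMap G)) : Prop :=
  ∀ f ∈ S, ∀ g ∈ G.Fset lmax W, G.Preceq lmax f g → g ∈ S

/-- Uncontrollable predecessors in the game `G'`. -/
def upreF (lmax W : ℕ) (S : Set (FMap G)) : Set (FMap G) :=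
  {p | G.ValidF lmax W p ∧ ∀ σ : G.A, ∃ f2 ∈ S, G.IsSucc lmax W p σ f2}

/-- The set of ⪯-minimal elements of `T`. -/
def minimal (lmax : ℕ) (T : Set (FMap G)) : Set (FMap G) :=
  {x | x ∈ T ∧ ∀ y ∈ T, G.Preceq lmax y x → y = x}

/-- The antichain version ⌊upre⌋ of the uncontrollable-predecessors operator. -/
def acUpre (lmax W : ℕ) (a : Set (FMap G)) : Set (FMap G) :=
  G.minimal lmax {p | G.ValidF lmax W p ∧ p ∉ G.FU lmax W ∧
    ∀ σ : G.A, ∃ q' ∈ a, ∃ r', G.IsSucc lmax W p σ r' ∧ G.Preceq lmax q' r'}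

/-- Upward closure within 𝓕. -/
def upSet (lmax W : ℕ) (T : Set (FMap G)) : Set (FMap G) :=
  {g | g ∈ G.Fset lmax W ∧ ∃ f ∈ T, G.Preceq lmax f g}

/-- Histories of the perfect-information game `G'`. -/
def histP (fs : ℕ → FMap G) (act : ℕ → G.A) (n : ℕ) : List (FMap G × G.A) :=
  (List.range n).map fun i => (fs i, act i)

/-- The given strategy of Eve is winning for the safety objective of `G'`:
every consistent play (a sequence of σ-successor moves from `f_I`) avoids 𝒰. -/
def WinsSafeP (lmax W : ℕ) (str : List (FMap G × G.A) → FMap G → G.A) : Prop :=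
  ∀ fs : ℕ → FMap G, ∀ act : ℕ → G.A,
    fs 0 = G.fI →
    (∀ i, G.IsSucc lmax W (fs i) (act i) (fs (i + 1))) →
    (∀ n, act n = str (G.histP fs act n) (fs n)) →
    ∀ i, fs i ∉ G.FU lmax W

/-- The monotone map `X ↦ 𝒰 ∪ upre(X)` on the powerset lattice of 𝓕. -/
def safeOp (lmax W : ℕ) : Set (FMap G) →o Set (FMap G) where
  toFun X := G.FU lmax W ∪ G.upreF lmax W X
  monotone' := by
    intro X Y hXY f hf
    rcases hf with hf | hf
    · exact Or.inl hf
    · refine Or.inr ⟨hf.1, fun σ => ?_⟩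
      obtain ⟨f2, hf2, hs⟩ := hf.2 σ
      exact ⟨f2, hXY hf2, hs⟩

end WGA

/-!
Follow Eve's winning strategy of `G'` on the knowledge sequence `supp⁻¹(ρ, f_I)` of the play.
Along every concrete path `π` the state `π n` stays in the support of the `n`-th knowledge
function, and `f(π (i + j))_j` underestimates the sum of the first `j` weights from position `i`
as long as all shorter windows from `i` are bad: the entry `f(p)_{j-1} + w` of `ζ` is available
exactly because `f(p)_{j-1} < 0`, and the clamping at `−W·lmax` is harmless since windows of
length at most `lmax` weigh at least `−W·lmax`. So a bad window of every length at position `i`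
drives the knowledge function at step `i + lmax` into `𝒰`.
-/

namespace WGA

variable (G : WGA)

section Successor

variable (lmax W : ℕ)

lemma zetaSet_finite (f : FMap G) (σ : G.A) (q : G.Q) (j : ℕ) :
    (G.zetaSet f σ q j).Finite := by
  refine ((Set.finite_range fun p => G.w p σ q).union
    (Set.finite_range fun p => G.fval f p (j - 1) + G.w p σ q)).subset ?_
  unfold zetaSet
  split
  · rintro x ⟨p, -, -, rfl⟩
    exact Or.inl ⟨p, rfl⟩
  · rintro x ⟨p, -, -, -, rfl⟩
    exact Or.inr ⟨p, rfl⟩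

/- `sInf ∅ = 0` in `ℤ`, so this value is also correct (namely `0`) when `Z` is empty. -/
lemma succVal_clamp_sInf {Z : Set ℤ} (hZ : Z.Finite) :
    succVal lmax W Z (max (-((W : ℤ) * lmax)) (min 0 (sInf Z))) := by
  rcases Z.eq_empty_or_nonempty with rfl | hne
  · exact Or.inl ⟨rfl, by simp⟩
  · exact Or.inr ⟨sInf Z, ⟨hne.csInf_mem hZ, fun y hy => csInf_le hZ.bddBelow hy⟩, rfl⟩

/-- The σ-successor of `f` whose support lies in the observation `o`. -/
noncomputable def succF (f : FMap G) (σ : G.A) (o : Set G.Q) : FMap G := fun q =>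
  if q ∈ G.postSet σ (G.fsupp f) ∩ o then
    some fun j => if 1 ≤ j ∧ j ≤ lmax then
      max (-((W : ℤ) * lmax)) (min 0 (sInf (G.zetaSet f σ q j))) else 0
  else none

/-- The sequence `supp⁻¹(ρ, f_I)` of knowledge functions along the play `(obs, act)`. -/
noncomputable def suppInv (obs : ℕ → Set G.Q) (act : ℕ → G.A) : ℕ → FMap G
  | 0 => G.fI
  | n + 1 => G.succF lmax W (suppInv obs act n) (act n) (obs (n + 1))

variable {lmax W}

lemma fsupp_succF (f : FMap G) (σ : G.A) (o : Set G.Q) :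
    G.fsupp (G.succF lmax W f σ o) = G.postSet σ (G.fsupp f) ∩ o := by
  ext q
  simp [fsupp, succF]

lemma isSucc_succF (f : FMap G) (σ : G.A) {o : Set G.Q} (ho : o ∈ G.Obs) :
    G.IsSucc lmax W f σ (G.succF lmax W f σ o) := by
  have hWl : -((W : ℤ) * lmax) ≤ 0 := neg_nonpos.mpr (by positivity)
  refine ⟨?_, ⟨o, ho, G.fsupp_succF f σ o⟩, ?_⟩
  · intro q g hg
    by_cases hq : q ∈ G.postSet σ (G.fsupp f) ∩ o
    · simp only [succF, hq, if_true, Option.some.injEq] at hg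
      subst hg
      refine ⟨fun i hi1 hil => ?_, fun i hi => ?_⟩
      · simp only [hi1, hil, and_self, if_true]
        exact ⟨le_max_left _ _, max_le hWl (min_le_left _ _)⟩
      · exact if_neg (by omega)
    · simp [succF, hq] at hg
  · intro q hq j hj1 hjl
    rw [fsupp_succF] at hq
    simp only [fval, succF, hq, if_true, Option.getD_some, hj1, hjl, and_self]
    exact succVal_clamp_sInf lmax W (G.zetaSet_finite f σ q j)

lemma fsupp_fI : G.fsupp G.fI = {G.qI} := by
  ext q
  by_cases hq : q = G.qI <;> simp [fsupp, fI, hq]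

lemma mem_fsupp_suppInv {obs : ℕ → Set G.Q} {act : ℕ → G.A} {π : ℕ → G.Q}
    (hπ : G.Concretizes obs act π) (hπ0 : π 0 = G.qI) (n : ℕ) :
    π n ∈ G.fsupp (G.suppInv lmax W obs act n) := by
  induction n with
  | zero => simp [suppInv, fsupp_fI, hπ0]
  | succ n ih =>
    rw [suppInv, fsupp_succF]
    exact ⟨⟨π n, ih, hπ.2 n⟩, hπ.1 (n + 1)⟩

end Successor

section Windows

variable {G} {lmax W : ℕ} {fs : ℕ → FMap G} {act : ℕ → G.A} {π : ℕ → G.Q}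

lemma winSum_one (i : ℕ) : G.winSum π act i 1 = G.w (π i) (act i) (π (i + 1)) := by
  simp [winSum]

lemma winSum_succ (i j : ℕ) :
    G.winSum π act i (j + 1) =
      G.winSum π act i j + G.w (π (i + j)) (act (i + j)) (π (i + j + 1)) :=
  Finset.sum_range_succ _ _

lemma neg_mul_le_winSum (hW : ∀ p σ q, G.Δ p σ q → |G.w p σ q| ≤ (W : ℤ))
    (hπ : ∀ n, G.Δ (π n) (act n) (π (n + 1))) (i j : ℕ) :
    -((W : ℤ) * j) ≤ G.winSum π act i j := by
  calc -((W : ℤ) * j) = ∑ _k ∈ Finset.range j, -(W : ℤ) := by simp [mul_comm]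
    _ ≤ G.winSum π act i j :=
      Finset.sum_le_sum fun k _ => (abs_le.mp (hW _ _ _ (hπ (i + k)))).1

lemma winSum_neg_of_not_GW {i j : ℕ} (hbad : ¬ G.GW 0 i lmax π act) (hj1 : 1 ≤ j)
    (hjl : j ≤ lmax) : G.winSum π act i j < 0 := by
  by_contra! hnonneg
  exact hbad ⟨j, hj1, hjl, div_nonneg (by exact_mod_cast hnonneg) (Nat.cast_nonneg j)⟩

lemma fval_le_of_mem_zetaSet {f f' : FMap G} {σ : G.A} {q : G.Q} {j : ℕ} {c b : ℤ}
    (hs : G.IsSucc lmax W f σ f') (hq : q ∈ G.fsupp f') (hj1 : 1 ≤ j) (hjl : j ≤ lmax)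
    (hc : c ∈ G.zetaSet f σ q j) (hcb : c ≤ b) (hb : -((W : ℤ) * lmax) ≤ b) :
    G.fval f' q j ≤ b := by
  rcases hs.2.2 q hq j hj1 hjl with ⟨hempty, -⟩ | ⟨z, hz, hv⟩
  · simp [hempty] at hc
  · rw [hv]
    exact max_le hb ((min_le_right 0 z).trans ((hz.2 hc).trans hcb))

variable (hsucc : ∀ n, G.IsSucc lmax W (fs n) (act n) (fs (n + 1)))
  (hmem : ∀ n, π n ∈ G.fsupp (fs n)) (hπ : ∀ n, G.Δ (π n) (act n) (π (n + 1)))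
  (hW : ∀ p σ q, G.Δ p σ q → |G.w p σ q| ≤ (W : ℤ))
include hsucc hmem hπ hW

lemma fval_le_winSum {i j : ℕ} (hbad : ¬ G.GW 0 i lmax π act) (hj1 : 1 ≤ j)
    (hjl : j ≤ lmax) :
    G.fval (fs (i + j)) (π (i + j)) j ≤ G.winSum π act i j := by
  have hlow : ∀ k ≤ lmax, -((W : ℤ) * lmax) ≤ G.winSum π act i k := fun k hk =>
    (neg_le_neg (mul_le_mul_of_nonneg_left (by exact_mod_cast hk) (Nat.cast_nonneg W))).trans
      (neg_mul_le_winSum hW hπ i k)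
  induction j, hj1 using Nat.le_induction with
  | base =>
    refine fval_le_of_mem_zetaSet (hsucc i) (hmem (i + 1)) le_rfl hjl ?_ (winSum_one i).ge
      (hlow 1 hjl)
    simp only [zetaSet, if_true]
    exact ⟨π i, hmem i, hπ i, rfl⟩
  | succ j hj1 ih =>
    have ih := ih (by omega)
    have hneg : G.fval (fs (i + j)) (π (i + j)) j < 0 :=
      ih.trans_lt (winSum_neg_of_not_GW hbad hj1 (by omega))
    refine fval_le_of_mem_zetaSet (hsucc (i + j)) (hmem (i + j + 1)) (by omega) hjl ?_
      ((winSum_succ i j).ge.trans' (add_le_add_left ih _)) (hlow (j + 1) hjl)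
    rw [zetaSet, if_neg (by omega)]
    exact ⟨π (i + j), hmem (i + j), hπ (i + j), by simpa using hneg, rfl⟩

lemma mem_FU_of_not_GW (hlmax : 1 ≤ lmax) {i : ℕ} (hbad : ¬ G.GW 0 i lmax π act) :
    fs (i + lmax) ∈ G.FU lmax W := by
  have hvalid : G.ValidF lmax W (fs (i + lmax)) := by
    simpa [show i + lmax - 1 + 1 = i + lmax by omega] using (hsucc (i + lmax - 1)).1
  exact ⟨hvalid, π (i + lmax), hmem _,
    (fval_le_winSum hsucc hmem hπ hW hbad hlmax le_rfl).trans_lt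
      (winSum_neg_of_not_GW hbad hlmax le_rfl)⟩

end Windows

end WGA

/-- Lemma 5: if Eve wins the safety objective in `G'`, then the strategy
`λ(ρ) = λ'(supp⁻¹(ρ, f_I))` is winning for her for `DirFix(0,lmax)` in `G`. -/
theorem dirfix_correctness (G : WGA) (lmax W : ℕ) (hlmax : 1 ≤ lmax)
    (hW : ∀ p σ q, G.Δ p σ q → |G.w p σ q| ≤ (W : ℤ))
    (hqI : ({G.qI} : Set G.Q) ∈ G.Obs)
    (strP : List (WGA.FMap G × G.A) → WGA.FMap G → G.A)
    (hwinP : G.WinsSafeP lmax W strP)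
    (str : List (Set G.Q × G.A) → Set G.Q → G.A)
    (hrel : ∀ (obs : ℕ → Set G.Q) (act : ℕ → G.A) (n : ℕ) (fs : ℕ → WGA.FMap G),
      (∀ i, i ≤ n → obs i ∈ G.Obs) → G.qI ∈ obs 0 →
      fs 0 = G.fI →
      (∀ i, i < n →
        G.IsSucc lmax W (fs i) (act i) (fs (i + 1)) ∧
        G.fsupp (fs (i + 1)) ⊆ obs (i + 1)) →
      str (G.hist obs act n) (obs n) = strP (G.histP fs act n) (fs n)) :
    ∀ obs act, G.IsPlay obs act → G.Consistent str obs act → G.DirFix 0 lmax obs act := by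
  rintro obs act ⟨hobs, hqI0, -⟩ hcons π hπ i
  set fs := G.suppInv lmax W obs act
  have hsucc (n : ℕ) : G.IsSucc lmax W (fs n) (act n) (fs (n + 1)) :=
    G.isSucc_succF _ _ (hobs (n + 1))
  have hsupp (n : ℕ) : G.fsupp (fs (n + 1)) ⊆ obs (n + 1) := by
    simp only [fs, WGA.suppInv, WGA.fsupp_succF, Set.inter_subset_right]
  have hconsP (n : ℕ) : act n = strP (G.histP fs act n) (fs n) :=
    (hcons n).trans <|
      hrel obs act n fs (fun k _ => hobs k) hqI0 rfl fun k _ => ⟨hsucc k, hsupp k⟩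
  have hobs0 : obs 0 = {G.qI} := (G.obs_partition G.qI).unique ⟨hobs 0, hqI0⟩ ⟨hqI, rfl⟩
  have hπ0 : π 0 = G.qI := by simpa [hobs0] using hπ.1 0
  by_contra hbad
  exact hwinP fs act rfl hsucc hconsP (i + lmax)
    (WGA.mem_FU_of_not_GW hsucc (G.mem_fsupp_suppInv hπ hπ0) hπ.2 hW hlmax hbad)
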